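/- arXiv:math/0611366 — 2 statements merged into one kernel-verified Lean document; each statement's English description precedes it below -/
import Mathlib

section
/- Let {f̂(n)}_{n≥0} ∈ GBV and {f̂(n) + f̂(−n)}_{n≥1} ∈ GBV, and suppose the series f(x) = Σ_{n=−∞}^{∞} f̂(n)e^{inx} converges at every x to a continuous function f ∈ C_{2π}. Then there exists C > 0 such that for every m ≥ 1 and every x ∈ [0, π]: |Σ_{k=m}^{∞} f̂(k) sin kx| ≤ C·sup_{k≥m} k·(|f̂(k)| + |f̂(−k)|) and |Σ_{k=m}^{∞} f̂(−k) sin kx| ≤ C·sup_{k≥m} k·(|f̂(k)| + |f̂(−k)|). -/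
open Filter Complex Real
open scoped ENNReal NNReal

noncomputable section

/-- `K(θ) = {z ∈ ℂ : |arg z| ≤ θ}`. -/
def Kset (θ : ℝ) : Set ℂ := {z : ℂ | |Complex.arg z| ≤ θ}

/-- The class GBV: `c_n ∈ K(θ₁)` for some `θ₁ ∈ [0, π/2)` and all `n ≥ 1`, and
`Σ_{n=m}^{2m} |Δc_n| ≤ M · max_{m ≤ n < m+N₀} |c_n|` for all `m ≥ 1`. -/
def GBV (c : ℕ → ℂ) : Prop :=
  (∃ θ₁ : ℝ, 0 ≤ θ₁ ∧ θ₁ < Real.pi / 2 ∧ ∀ n, 1 ≤ n → c n ∈ Kset θ₁) ∧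
  (∃ N₀ : ℕ, 1 ≤ N₀ ∧ ∃ M : ℝ, 0 < M ∧ ∀ m, 1 ≤ m →
    (∑ n ∈ Finset.Icc m (2 * m), ‖c n - c (n + 1)‖) ≤
      M * ⨆ n ∈ Finset.Ico m (m + N₀), ‖c n‖)

/-!
Let `s` be the supremum of `k (|f̂(k)| + |f̂(-k)|)` over `k ≥ m`, so that the coefficients
`c_k = f̂(±k)` satisfy `|c_k| ≤ s / k`. The GBV condition then bounds the variation of `c`
on each block `[n, 2n]` by `O(s / n)`, and summing over dyadic blocks gives
`∑_{k ≥ n} |Δc_k| = O(s / n)`.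
For `f̂(-k)` write it as `(f̂(k) + f̂(-k)) - f̂(k)`, a difference of two GBV sequences.

For `0 < x ≤ π` split the sine series at `k ≈ 1 / x`. Each earlier term is at most
`(s / k) · kx = sx`, so together they contribute at most `s`. For the later terms, Abel
summation against the partial sums of `sin kx`, which are at most `π / x`, gives
`(π / x) · O(s / k)` with `k ≥ 1 / x`, that is `O(s)`.
-/

open Finset Topology

theorem norm_sum_Ico_smul_le {R E : Type*} [NormedRing R] [NormedAddCommGroup E] [Module R E]
    [IsBoundedSMul R E] {f : ℕ → R} {g : ℕ → E} {D : ℝ}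
    (hg : ∀ n, ‖∑ i ∈ range n, g i‖ ≤ D) (m n : ℕ) :
    ‖∑ i ∈ Ico m n, f i • g i‖ ≤
      D * (‖f (n - 1)‖ + ‖f m‖ + ∑ i ∈ Ico m (n - 1), ‖f (i + 1) - f i‖) := by
  have hD : 0 ≤ D := (norm_nonneg _).trans (hg 0)
  rcases le_or_gt n m with hnm | hmn
  · rw [Ico_eq_empty_of_le hnm, sum_empty, norm_zero]
    positivity
  rw [sum_Ico_by_parts f g hmn, mul_add, mul_add, mul_sum]
  refine (norm_sub_le _ _).trans (add_le_add ((norm_sub_le _ _).trans (add_le_add ?_ ?_)) ?_)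
  · exact (norm_smul_le _ _).trans (by rw [mul_comm]; gcongr; exact hg n)
  · exact (norm_smul_le _ _).trans (by rw [mul_comm]; gcongr; exact hg m)
  · refine (norm_sum_le _ _).trans (sum_le_sum fun i _ => (norm_smul_le _ _).trans ?_)
    rw [mul_comm]; gcongr; exact hg (i + 1)

theorem two_div_pi_mul_le_norm_exp_I_mul_sub_one {x : ℝ} (hx0 : 0 ≤ x) (hxπ : x ≤ π) :
    2 / π * x ≤ ‖Complex.exp (Complex.I * x) - 1‖ := by
  rw [Complex.norm_exp_I_mul_ofReal_sub_one, norm_mul, Real.norm_ofNat, Real.norm_eq_abs]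
  have hjordan := Real.mul_le_sin (x := x / 2) (by positivity) (by linarith)
  have := le_abs_self (Real.sin (x / 2))
  linarith

theorem abs_sum_range_sin_nat_mul_le {x : ℝ} (hx0 : 0 < x) (hxπ : x ≤ π) (n : ℕ) :
    |∑ k ∈ range n, Real.sin (k * x)| ≤ π / x := by
  set z := Complex.exp (Complex.I * x)
  have hz : 2 / π * x ≤ ‖z - 1‖ := two_div_pi_mul_le_norm_exp_I_mul_sub_one hx0.le hxπ
  have hz0 : 0 < ‖z - 1‖ := lt_of_lt_of_le (by positivity) hz
  have hsin : ∀ k : ℕ, Real.sin (k * x) = (z ^ k).im := fun k => by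
    rw [← Complex.exp_nat_mul, ← mul_assoc, mul_comm _ Complex.I, mul_assoc,
      ← Complex.ofReal_natCast, ← Complex.ofReal_mul, mul_comm Complex.I,
      Complex.exp_ofReal_mul_I_im]
  calc |∑ k ∈ range n, Real.sin (k * x)| = |(∑ k ∈ range n, z ^ k).im| := by
        simp only [hsin, Complex.im_sum]
    _ ≤ ‖(z ^ n - 1) / (z - 1)‖ := by
        rw [← geom_sum_eq (sub_ne_zero.mp (norm_pos_iff.mp hz0))]
        exact Complex.abs_im_le_norm _
    _ ≤ 2 / ‖z - 1‖ := by
        rw [norm_div]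
        gcongr
        refine (norm_sub_le _ _).trans ?_
        rw [norm_pow, Complex.norm_exp_I_mul_ofReal, one_pow, norm_one, one_add_one_eq_two]
    _ ≤ 2 / (2 / π * x) := by gcongr
    _ = π / x := by field_simp

theorem sum_Icc_le_of_sum_Icc_two_mul_le {g : ℕ → ℝ} (hg : ∀ k, 0 ≤ g k) {K : ℝ} (hK : 0 ≤ K)
    {m : ℕ} (hblock : ∀ n, m ≤ n → ∑ k ∈ Icc n (2 * n), g k ≤ K / n)
    (n N : ℕ) (hmn : m ≤ n) (hn : 0 < n) :
    ∑ k ∈ Icc n N, g k ≤ 2 * K / n := by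
  rcases lt_or_ge N n with hN | hN
  · rw [Icc_eq_empty_of_lt hN, sum_empty]
    positivity
  have htail := sum_Icc_le_of_sum_Icc_two_mul_le hg hK hblock (2 * n) N (by omega) (by omega)
  calc ∑ k ∈ Icc n N, g k ≤ ∑ k ∈ Icc n (2 * n) ∪ Icc (2 * n) N, g k :=
        sum_le_sum_of_subset_of_nonneg (fun k => by simp only [mem_union, mem_Icc]; omega)
          fun k _ _ => hg k
    _ ≤ ∑ k ∈ Icc n (2 * n), g k + ∑ k ∈ Icc (2 * n) N, g k := by
        rw [← sum_union_inter]
        exact le_add_of_nonneg_right (sum_nonneg fun k _ => hg k)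
    _ ≤ K / n + 2 * K / (2 * n : ℕ) := add_le_add (hblock n hmn) htail
    _ = 2 * K / n := by push_cast; field_simp; ring
termination_by N + 1 - n

theorem norm_sum_mul_sin_le_of_subset_Ico {c : ℕ → ℂ} {s x : ℝ} (hs : 0 ≤ s) (hx : 0 < x)
    {t : Finset ℕ} (ht : t ⊆ Ico 1 ⌈x⁻¹⌉₊) (hc : ∀ k ∈ t, ‖c k‖ ≤ s / k) :
    ‖∑ k ∈ t, c k * (Real.sin (k * x) : ℂ)‖ ≤ s := by
  have hterm : ∀ k ∈ t, ‖c k * (Real.sin (k * x) : ℂ)‖ ≤ s * x := by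
    intro k hkt
    have hk : (0 : ℝ) < k := by exact_mod_cast (mem_Ico.mp (ht hkt)).1
    rw [norm_mul, Complex.norm_real, Real.norm_eq_abs]
    calc ‖c k‖ * |Real.sin (k * x)| ≤ s / k * (k * x) :=
          mul_le_mul (hc k hkt) (Real.abs_sin_le_abs.trans (abs_of_pos (by positivity)).le)
            (abs_nonneg _) (by positivity)
      _ = s * x := by field_simp
  have hcard : (#t : ℝ) < x⁻¹ := by
    have hle : #t + 1 ≤ ⌈x⁻¹⌉₊ := by
      have hsub := card_le_card ht
      rw [Nat.card_Ico] at hsub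
      have := Nat.ceil_pos.mpr (inv_pos.mpr hx)
      omega
    have := Nat.ceil_lt_add_one (inv_nonneg.mpr hx.le)
    have : (#t : ℝ) + 1 ≤ ⌈x⁻¹⌉₊ := by exact_mod_cast hle
    linarith
  calc ‖∑ k ∈ t, c k * (Real.sin (k * x) : ℂ)‖ ≤ #t • (s * x) :=
        (norm_sum_le _ _).trans (sum_le_card_nsmul t _ _ hterm)
    _ ≤ x⁻¹ * (s * x) := by rw [nsmul_eq_mul]; gcongr
    _ = s := by field_simp

theorem norm_sum_Icc_mul_sin_le_of_inv_le {c : ℕ → ℂ} {s A x : ℝ} (hA : 0 ≤ A) (hx0 : 0 < x)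
    (hxπ : x ≤ π) {p : ℕ} (hp : x⁻¹ ≤ p) (hc : ∀ k, p ≤ k → ‖c k‖ ≤ s / k)
    (hvar : ∀ n, p ≤ n → ∑ k ∈ Icc n (2 * n), ‖c k - c (k + 1)‖ ≤ A * s / n) (N : ℕ) :
    ‖∑ k ∈ Icc p N, c k * (Real.sin (k * x) : ℂ)‖ ≤ 2 * π * (1 + A) * s := by
  have hp0 : (0 : ℝ) < p := (inv_pos.mpr hx0).trans_le hp
  have hs : 0 ≤ s := by
    have := (norm_nonneg _).trans (hc p le_rfl)
    rwa [le_div_iff₀ hp0, zero_mul] at this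
  rcases lt_or_ge N p with hN | hN
  · rw [Icc_eq_empty_of_lt hN, sum_empty, norm_zero]
    positivity
  have hD : ∀ n, ‖∑ i ∈ range n, (Real.sin (i * x) : ℂ)‖ ≤ π / x := fun n => by
    rw [← Complex.ofReal_sum, Complex.norm_real, Real.norm_eq_abs]
    exact abs_sum_range_sin_nat_mul_le hx0 hxπ n
  have hvar' : ∑ i ∈ Ico p N, ‖c (i + 1) - c i‖ ≤ 2 * (A * s) / p :=
    calc ∑ i ∈ Ico p N, ‖c (i + 1) - c i‖ ≤ ∑ i ∈ Icc p N, ‖c i - c (i + 1)‖ := by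
          refine (sum_le_sum fun i _ => (norm_sub_rev _ _).le).trans ?_
          exact sum_le_sum_of_subset_of_nonneg Ico_subset_Icc_self fun _ _ _ => norm_nonneg _
      _ ≤ 2 * (A * s) / p :=
          sum_Icc_le_of_sum_Icc_two_mul_le (fun _ => norm_nonneg _) (by positivity) hvar p N
            le_rfl (by exact_mod_cast hp0)
  have hcN : ‖c N‖ ≤ s / p :=
    (hc N hN).trans (div_le_div_of_nonneg_left hs hp0 (by exact_mod_cast hN))
  calc ‖∑ k ∈ Icc p N, c k * (Real.sin (k * x) : ℂ)‖
        = ‖∑ k ∈ Ico p (N + 1), c k • (Real.sin (k * x) : ℂ)‖ := by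
          rw [Ico_add_one_right_eq_Icc]; rfl
    _ ≤ π / x * (‖c N‖ + ‖c p‖ + ∑ i ∈ Ico p N, ‖c (i + 1) - c i‖) :=
          norm_sum_Ico_smul_le hD p (N + 1)
    _ ≤ π / x * (s / p + s / p + 2 * (A * s) / p) := by
          gcongr
          exact hc p le_rfl
    _ = 2 * π * (1 + A) * s * (x⁻¹ / p) := by field_simp; ring
    _ ≤ 2 * π * (1 + A) * s := by
          refine mul_le_of_le_one_right (by positivity) ?_
          rwa [div_le_one hp0]

theorem norm_sum_Icc_mul_sin_le {c : ℕ → ℂ} {s A : ℝ} (hA : 0 ≤ A) {m : ℕ} (hm : 0 < m)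
    (hc : ∀ k, m ≤ k → ‖c k‖ ≤ s / k)
    (hvar : ∀ n, m ≤ n → ∑ k ∈ Icc n (2 * n), ‖c k - c (k + 1)‖ ≤ A * s / n)
    {x : ℝ} (hx : x ∈ Set.Icc 0 π) (N : ℕ) :
    ‖∑ k ∈ Icc m N, c k * (Real.sin (k * x) : ℂ)‖ ≤ (1 + 2 * π * (1 + A)) * s := by
  have hs : 0 ≤ s := by
    have := (norm_nonneg _).trans (hc m le_rfl)
    rwa [le_div_iff₀ (by exact_mod_cast hm), zero_mul] at this
  obtain ⟨hx0, hxπ⟩ := hx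
  rcases hx0.eq_or_lt with rfl | hx0
  · simp only [mul_zero, Real.sin_zero, Complex.ofReal_zero, sum_const_zero, norm_zero]
    positivity
  set p := max m ⌈x⁻¹⌉₊
  have hsplit : (Icc m N).filter (fun k => ¬ k < ⌈x⁻¹⌉₊) = Icc p N := by
    ext k; simp only [mem_filter, mem_Icc, p]; omega
  rw [← sum_filter_add_sum_filter_not (Icc m N) (· < ⌈x⁻¹⌉₊), hsplit, add_mul, one_mul]
  refine (norm_add_le _ _).trans (add_le_add ?_ ?_)
  · refine norm_sum_mul_sin_le_of_subset_Ico hs hx0 (fun k hk => ?_) fun k hk => ?_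
    · simp only [mem_filter, mem_Icc, mem_Ico] at hk ⊢; omega
    · exact hc k (mem_Icc.mp (mem_filter.mp hk).1).1
  · exact norm_sum_Icc_mul_sin_le_of_inv_le hA hx0 hxπ
      ((Nat.le_ceil _).trans (by exact_mod_cast le_max_right _ _))
      (fun k hk => hc k ((le_max_left _ _).trans hk))
      (fun n hn => hvar n ((le_max_left _ _).trans hn)) N

theorem GBV.exists_sum_norm_sub_le {c : ℕ → ℂ} (hc : GBV c) :
    ∃ M : ℝ, 0 ≤ M ∧ ∀ (s : ℝ) (m : ℕ), 0 < m → (∀ k, m ≤ k → ‖c k‖ ≤ s / k) →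
      ∀ n, m ≤ n → ∑ k ∈ Icc n (2 * n), ‖c k - c (k + 1)‖ ≤ M * s / n := by
  obtain ⟨-, N₀, -, M, hM, hvar⟩ := hc
  refine ⟨M, hM.le, fun s m hm hcs n hmn => ?_⟩
  have hn : (0 : ℝ) < n := by exact_mod_cast hm.trans_le hmn
  have hs : 0 ≤ s := by
    have := (norm_nonneg _).trans (hcs n hmn)
    rwa [le_div_iff₀ hn, zero_mul] at this
  have hwindow : ⨆ k ∈ Ico n (n + N₀), ‖c k‖ ≤ s / n := by
    refine Real.iSup_le (fun k => Real.iSup_le (fun hk => ?_) (by positivity)) (by positivity)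
    have hnk := (mem_Ico.mp hk).1
    exact (hcs k (hmn.trans hnk)).trans (div_le_div_of_nonneg_left hs hn (by exact_mod_cast hnk))
  calc ∑ k ∈ Icc n (2 * n), ‖c k - c (k + 1)‖ ≤ M * ⨆ k ∈ Ico n (n + N₀), ‖c k‖ :=
        hvar n (by omega)
    _ ≤ M * (s / n) := by gcongr
    _ = M * s / n := by ring

theorem sum_norm_sub_sub_le {E : Type*} [SeminormedAddCommGroup E] (a b : ℕ → E)
    (t : Finset ℕ) :
    ∑ k ∈ t, ‖(b k - a k) - (b (k + 1) - a (k + 1))‖ ≤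
      ∑ k ∈ t, ‖b k - b (k + 1)‖ + ∑ k ∈ t, ‖a k - a (k + 1)‖ := by
  rw [← sum_add_distrib]
  refine sum_le_sum fun k _ => ?_
  rw [sub_sub_sub_comm]
  exact norm_sub_le _ _

theorem ofReal_le_coe_mul_of_forall_eq_ofReal {T : ℝ≥0∞} {C : ℝ≥0} (hC : C ≠ 0) {y : ℝ}
    (h : ∀ s : ℝ, 0 ≤ s → T = ENNReal.ofReal s → y ≤ C * s) :
    ENNReal.ofReal y ≤ C * T := by
  rcases eq_or_ne T ⊤ with rfl | hT
  · rw [ENNReal.mul_top (by exact_mod_cast hC)]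
    exact le_top
  rw [← ENNReal.ofReal_toReal hT, ← ENNReal.ofReal_coe_nnreal, ← ENNReal.ofReal_mul C.coe_nonneg]
  exact ENNReal.ofReal_le_ofReal (h _ ENNReal.toReal_nonneg (ENNReal.ofReal_toReal hT).symm)

theorem norm_add_norm_le_div_of_iSup_eq_ofReal {E : Type*} [SeminormedAddCommGroup E]
    {a b : ℕ → E} {m k : ℕ} {s : ℝ} (hs : 0 ≤ s)
    (h : ⨆ k : ℕ, ⨆ _ : m ≤ k, (k : ℝ≥0∞) * ((‖a k‖₊ : ℝ≥0∞) + (‖b k‖₊ : ℝ≥0∞)) =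
      ENNReal.ofReal s) (hmk : m ≤ k) (hk : 0 < k) :
    ‖a k‖ + ‖b k‖ ≤ s / k := by
  have hle := h ▸ le_iSup₂ (f := fun k (_ : m ≤ k) =>
    (k : ℝ≥0∞) * ((‖a k‖₊ : ℝ≥0∞) + (‖b k‖₊ : ℝ≥0∞))) k hmk
  rw [le_div_iff₀ (by exact_mod_cast hk), mul_comm]
  rwa [← enorm_eq_nnnorm, ← enorm_eq_nnnorm, ← ofReal_norm, ← ofReal_norm,
    ← ENNReal.ofReal_add (norm_nonneg _) (norm_nonneg _), ← ENNReal.ofReal_natCast,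
    ← ENNReal.ofReal_mul (Nat.cast_nonneg _),
    ENNReal.ofReal_le_ofReal_iff hs] at hle

theorem enorm_le_of_tendsto_sum_mul_sin {c : ℕ → ℂ} {A : ℝ} (hA : 0 ≤ A) {m : ℕ} (hm : 0 < m)
    {x : ℝ} (hx : x ∈ Set.Icc 0 π) {T : ℝ≥0∞}
    (hT : ∀ s : ℝ, 0 ≤ s → T = ENNReal.ofReal s → (∀ k, m ≤ k → ‖c k‖ ≤ s / k) ∧
      ∀ n, m ≤ n → ∑ k ∈ Icc n (2 * n), ‖c k - c (k + 1)‖ ≤ A * s / n)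
    {L : ℂ} (hL : Tendsto (fun N => ∑ k ∈ Icc m N, c k * (Real.sin (k * x) : ℂ)) atTop (𝓝 L)) :
    (‖L‖₊ : ℝ≥0∞) ≤ ((1 + 2 * π * (1 + A)).toNNReal : ℝ≥0∞) * T := by
  have hC : 0 < 1 + 2 * π * (1 + A) := by positivity
  rw [← enorm_eq_nnnorm, ← ofReal_norm]
  refine ofReal_le_coe_mul_of_forall_eq_ofReal (Real.toNNReal_pos.mpr hC).ne' fun s hs hTs => ?_
  obtain ⟨hc, hvar⟩ := hT s hs hTs
  rw [Real.coe_toNNReal _ hC.le]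
  exact le_of_tendsto' hL.norm (norm_sum_Icc_mul_sin_le hA hm hc hvar hx)

theorem stmt_10_general (fhat : ℤ → ℂ)
    (h1 : GBV (fun n : ℕ => fhat (n : ℤ)))
    (h2 : GBV (fun n : ℕ => fhat (n : ℤ) + fhat (-(n : ℤ)))) :
    ∃ C : ℝ≥0, 0 < C ∧ ∀ m : ℕ, 1 ≤ m → ∀ x ∈ Set.Icc (0 : ℝ) Real.pi,
      (∀ L : ℂ, Filter.Tendsto
          (fun N : ℕ => ∑ k ∈ Finset.Icc m N, fhat (k : ℤ) * (Real.sin (k * x) : ℂ))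
          Filter.atTop (nhds L) →
        (‖L‖₊ : ℝ≥0∞) ≤ (C : ℝ≥0∞) *
          ⨆ k : ℕ, ⨆ _ : m ≤ k, (k : ℝ≥0∞) *
            ((‖fhat (k : ℤ)‖₊ : ℝ≥0∞) + (‖fhat (-(k : ℤ))‖₊ : ℝ≥0∞))) ∧
      (∀ L : ℂ, Filter.Tendsto
          (fun N : ℕ => ∑ k ∈ Finset.Icc m N, fhat (-(k : ℤ)) * (Real.sin (k * x) : ℂ))
          Filter.atTop (nhds L) →
        (‖L‖₊ : ℝ≥0∞) ≤ (C : ℝ≥0∞) *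
          ⨆ k : ℕ, ⨆ _ : m ≤ k, (k : ℝ≥0∞) *
            ((‖fhat (k : ℤ)‖₊ : ℝ≥0∞) + (‖fhat (-(k : ℤ))‖₊ : ℝ≥0∞))) := by
  obtain ⟨M₁, hM₁, hvar₁⟩ := h1.exists_sum_norm_sub_le
  obtain ⟨M₂, hM₂, hvar₂⟩ := h2.exists_sum_norm_sub_le
  have hA : 0 ≤ M₁ + M₂ := add_nonneg hM₁ hM₂
  refine ⟨(1 + 2 * π * (1 + (M₁ + M₂))).toNNReal, Real.toNNReal_pos.mpr (by positivity),
    fun m hm x hx => ⟨fun L hL => enorm_le_of_tendsto_sum_mul_sin hA hm hx (fun s hs hT => ?_) hL,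
      fun L hL => enorm_le_of_tendsto_sum_mul_sin hA hm hx (fun s hs hT => ?_) hL⟩⟩
  all_goals
    have hcoef : ∀ k : ℕ, m ≤ k → ‖fhat k‖ + ‖fhat (-(k : ℤ))‖ ≤ s / k := fun k hk =>
      norm_add_norm_le_div_of_iSup_eq_ofReal hs hT hk (by omega)
    have hpos : ∀ k : ℕ, m ≤ k → ‖fhat k‖ ≤ s / k := fun k hk =>
      (le_add_of_nonneg_right (norm_nonneg _)).trans (hcoef k hk)
  · exact ⟨hpos, fun n hn => (hvar₁ s m hm hpos n hn).trans (by gcongr; linarith)⟩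
  refine ⟨fun k hk => (le_add_of_nonneg_left (norm_nonneg _)).trans (hcoef k hk), fun n hn => ?_⟩
  have hsum : ∀ k : ℕ, m ≤ k → ‖fhat k + fhat (-(k : ℤ))‖ ≤ s / k := fun k hk =>
    (norm_add_le _ _).trans (hcoef k hk)
  calc ∑ k ∈ Icc n (2 * n), ‖fhat (-(k : ℤ)) - fhat (-((k + 1 : ℕ) : ℤ))‖
      = ∑ k ∈ Icc n (2 * n), ‖((fhat k + fhat (-(k : ℤ))) - fhat k) -
          ((fhat (k + 1 : ℕ) + fhat (-((k + 1 : ℕ) : ℤ))) - fhat (k + 1 : ℕ))‖ := by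
        simp only [add_sub_cancel_left]
    _ ≤ M₂ * s / n + M₁ * s / n :=
        (sum_norm_sub_sub_le _ _ _).trans
          (add_le_add (hvar₂ s m hm hsum n hn) (hvar₁ s m hm hpos n hn))
    _ = (M₁ + M₂) * s / n := by ring

/-- Lemma 7: under the GBV hypotheses with `f ∈ C_{2π}`, uniformly in `m ≥ 1` and
`x ∈ [0, π]`, `|Σ_{k=m}^{∞} f̂(±k) sin kx| = O(sup_{k≥m} k(|f̂(k)| + |f̂(−k)|))`
(the tail sums being interpreted as limits of partial sums, and the supremum being
taken in `ℝ≥0∞`). -/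
theorem stmt_10 (fhat : ℤ → ℂ) (f : ℝ → ℂ)
    (h1 : GBV (fun n : ℕ => fhat (n : ℤ)))
    (h2 : GBV (fun n : ℕ => fhat (n : ℤ) + fhat (-(n : ℤ))))
    (hconv : ∀ x : ℝ, Filter.Tendsto
      (fun N : ℕ => ∑ k ∈ Finset.Icc (-(N : ℤ)) (N : ℤ),
        fhat k * Complex.exp ((k : ℂ) * (x : ℂ) * Complex.I))
      Filter.atTop (nhds (f x)))
    (hcont : Continuous f) :
    ∃ C : ℝ≥0, 0 < C ∧ ∀ m : ℕ, 1 ≤ m → ∀ x ∈ Set.Icc (0 : ℝ) Real.pi,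
      (∀ L : ℂ, Filter.Tendsto
          (fun N : ℕ => ∑ k ∈ Finset.Icc m N, fhat (k : ℤ) * (Real.sin (k * x) : ℂ))
          Filter.atTop (nhds L) →
        (‖L‖₊ : ℝ≥0∞) ≤ (C : ℝ≥0∞) *
          ⨆ k : ℕ, ⨆ _ : m ≤ k, (k : ℝ≥0∞) *
            ((‖fhat (k : ℤ)‖₊ : ℝ≥0∞) + (‖fhat (-(k : ℤ))‖₊ : ℝ≥0∞))) ∧
      (∀ L : ℂ, Filter.Tendsto
          (fun N : ℕ => ∑ k ∈ Finset.Icc m N, fhat (-(k : ℤ)) * (Real.sin (k * x) : ℂ))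
          Filter.atTop (nhds L) →
        (‖L‖₊ : ℝ≥0∞) ≤ (C : ℝ≥0∞) *
          ⨆ k : ℕ, ⨆ _ : m ≤ k, (k : ℝ≥0∞) *
            ((‖fhat (k : ℤ)‖₊ : ℝ≥0∞) + (‖fhat (-(k : ℤ))‖₊ : ℝ≥0∞))) :=
  stmt_10_general fhat h1 h2
end
end

section
/- Let {f̂(n)}_{n≥0} ∈ GBV and {f̂(n) + f̂(−n)}_{n≥1} ∈ GBV, and suppose the series f(x) = Σ_{n=−∞}^{∞} f̂(n)e^{inx} converges at every x to a continuous function f ∈ C_{2π}. Then there exists C > 0 such that for all sufficiently large n: sup_{k≥2n+1} k·|f̂(k) + f̂(−k)| ≤ C·( max_{1≤k≤n} k·(|f̂(n+k)| + |f̂(−n−k)|) + Σ_{k=2n+1}^{∞} |f̂(k) + f̂(−k)| ). -/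
open Filter Complex Real
open scoped ENNReal NNReal

/-! Write `c_k = f̂(k) + f̂(-k)` and let `k > 2n`. Applying the GBV condition to disjoint windows
`[m, m + N₀)` with `k ≤ 2m` gives about `k / N₀` distinct indices `j ∈ [3k/4, k]` with
`|c_k| ≤ (M + 1) |c_j|`. Averaging over them, `k |c_k|` is bounded by `N₀ (M + 1)` times the mean
of `k |c_j|`. An index `j ≤ 2n` has `k ≤ 4 (j - n)`, so `k |c_j|` is at most four times the
maximum term `(j - n)(|f̂(j)| + |f̂(-j)|)`; the indices `j > 2n` together contribute at most the
tail sum. -/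

open Finset

/-- The second condition of `GBV`, with its constants `N₀` and `M` made explicit. -/
def WindowVariationBound (c : ℕ → ℂ) (N₀ : ℕ) (M : ℝ) : Prop :=
  ∀ m, 1 ≤ m →
    (∑ n ∈ Icc m (2 * m), ‖c n - c (n + 1)‖) ≤ M * ⨆ n ∈ Ico m (m + N₀), ‖c n‖

lemma ENNReal.sum_le_tsum_comp_add (f : ℕ → ℝ≥0∞) {S : Finset ℕ} {a : ℕ}
    (hS : ∀ j ∈ S, a ≤ j) : ∑ j ∈ S, f j ≤ ∑' i, f (a + i) := by
  have hinj : Set.InjOn (· - a) (S : Set ℕ) := fun i hi j hj hij => by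
    have := hS i hi; have := hS j hj; simp only at hij; omega
  calc ∑ j ∈ S, f j = ∑ i ∈ S.image (· - a), f (a + i) := by
        rw [sum_image hinj]
        exact sum_congr rfl fun j hj => by rw [Nat.add_sub_cancel' (hS j hj)]
    _ ≤ ∑' i, f (a + i) := ENNReal.sum_le_tsum _

namespace WindowVariationBound

variable {c : ℕ → ℂ} {N₀ : ℕ} {M : ℝ}

lemma exists_mem_Ico_norm_le (hc : WindowVariationBound c N₀ M) (hN₀ : 1 ≤ N₀) (hM : 0 ≤ M)
    {m k : ℕ} (hm : 1 ≤ m) (hmk : m + N₀ ≤ k + 1) (hk : k ≤ 2 * m) :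
    ∃ j ∈ Ico m (m + N₀), ‖c k‖ ≤ (M + 1) * ‖c j‖ := by
  obtain ⟨j, hj, hmax⟩ :=
    (Ico m (m + N₀)).exists_max_image (fun n => ‖c n‖) (nonempty_Ico.2 (by omega))
  refine ⟨j, hj, ?_⟩
  have hsup : (⨆ n ∈ Ico m (m + N₀), ‖c n‖) ≤ ‖c j‖ :=
    Real.iSup_le (fun n => Real.iSup_le (hmax n) (norm_nonneg _)) (norm_nonneg _)
  rw [mem_Ico] at hj
  have hvar : ‖c k - c j‖ ≤ M * ‖c j‖ :=
    calc ‖c k - c j‖ = dist (c j) (c k) := by rw [dist_comm, dist_eq_norm]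
      _ ≤ ∑ i ∈ Ico j k, dist (c i) (c (i + 1)) := dist_le_Ico_sum_dist c (by omega)
      _ ≤ ∑ i ∈ Icc m (2 * m), ‖c i - c (i + 1)‖ := by
        simp only [dist_eq_norm]
        refine sum_le_sum_of_subset_of_nonneg (fun i hi => ?_) fun _ _ _ => norm_nonneg _
        rw [mem_Ico] at hi
        rw [mem_Icc]
        omega
      _ ≤ M * ‖c j‖ := (hc m hm).trans (mul_le_mul_of_nonneg_left hsup hM)
  linarith [norm_le_norm_add_norm_sub' (c k) (c j)]

lemma exists_finset_norm_le (hc : WindowVariationBound c N₀ M) (hN₀ : 1 ≤ N₀) (hM : 0 ≤ M)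
    {k : ℕ} (hk : 8 * N₀ + 8 ≤ k) :
    ∃ S : Finset ℕ, k ≤ 8 * (N₀ * #S) ∧ ∀ j ∈ S, 3 * k ≤ 4 * j ∧ ‖c k‖ ≤ (M + 1) * ‖c j‖ := by
  set a := k - k / 4
  set L := (k / 4 + 1) / N₀
  -- the disjoint windows `[a + i N₀, a + (i + 1) N₀)`, `i < L`, all lie in `[a, k]`
  have hL : L * N₀ ≤ k / 4 + 1 := Nat.div_mul_le_self _ _
  have hL' : k / 4 + 1 < L * N₀ + N₀ := Nat.lt_div_mul_add hN₀
  have hwin : ∀ i < L, ∃ j ∈ Ico (a + i * N₀) (a + i * N₀ + N₀), ‖c k‖ ≤ (M + 1) * ‖c j‖ := by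
    intro i hi
    have : (i + 1) * N₀ ≤ L * N₀ := Nat.mul_le_mul_right N₀ hi
    rw [add_one_mul] at this
    exact hc.exists_mem_Ico_norm_le hN₀ hM (by omega) (by omega) (by omega)
  choose! j hj hjk using hwin
  have hinj : Set.InjOn j (range L : Set ℕ) := by
    have hidx : ∀ i < L, (j i - a) / N₀ = i := fun i hi => by
      have := mem_Ico.1 (hj i hi)
      exact Nat.div_eq_of_lt_le (by omega) (by rw [add_one_mul]; omega)
    intro i₁ hi₁ i₂ hi₂ h
    rw [coe_range, Set.mem_Iio] at hi₁ hi₂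
    rw [← hidx i₁ hi₁, ← hidx i₂ hi₂, h]
  refine ⟨(range L).image j, ?_, ?_⟩
  · rw [card_image_of_injOn hinj, card_range, Nat.mul_comm N₀ L]
    omega
  · simp only [mem_image, mem_range]
    rintro _ ⟨i, hi, rfl⟩
    have := mem_Ico.1 (hj i hi)
    exact ⟨by omega, hjk i hi⟩

theorem natCast_mul_enorm_le (hc : WindowVariationBound c N₀ M) (hN₀ : 1 ≤ N₀) (hM : 0 ≤ M)
    {n k : ℕ} (hn : 4 * N₀ + 4 ≤ n) (hk : 2 * n + 1 ≤ k) {A : ℝ≥0∞}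
    (hA : ∀ j ∈ Ioc n (2 * n), ((j - n : ℕ) : ℝ≥0∞) * ‖c j‖ₑ ≤ A) :
    (k : ℝ≥0∞) * ‖c k‖ₑ ≤
      8 * N₀ * ENNReal.ofReal (M + 1) * (A + ∑' i, ‖c (2 * n + 1 + i)‖ₑ) := by
  obtain ⟨S, hcard, hS⟩ := hc.exists_finset_norm_le hN₀ hM (k := k) (by omega)
  set μ := ENNReal.ofReal (M + 1)
  set T := ∑' i, ‖c (2 * n + 1 + i)‖ₑ
  have hrep : ∀ j ∈ S, ‖c k‖ₑ ≤ μ * ‖c j‖ₑ := fun j hj => by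
    rw [← ofReal_norm, ← ofReal_norm, ← ENNReal.ofReal_mul (by linarith)]
    exact ENNReal.ofReal_le_ofReal (hS j hj).2
  have hhead : ∀ j ∈ S.filter (· ≤ 2 * n), (k : ℝ≥0∞) * ‖c j‖ₑ ≤ 4 * A := fun j hj => by
    rw [mem_filter] at hj
    have := (hS j hj.1).1
    calc (k : ℝ≥0∞) * ‖c j‖ₑ ≤ ((4 * (j - n) : ℕ) : ℝ≥0∞) * ‖c j‖ₑ := by gcongr; omega
      _ = 4 * (((j - n : ℕ) : ℝ≥0∞) * ‖c j‖ₑ) := by rw [Nat.cast_mul, mul_assoc]; rfl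
      _ ≤ 4 * A := by gcongr; exact hA j (mem_Ioc.2 ⟨by omega, hj.2⟩)
  have htail : ∑ j ∈ S.filter (¬ · ≤ 2 * n), ‖c j‖ₑ ≤ T :=
    ENNReal.sum_le_tsum_comp_add _ fun j hj => by rw [mem_filter] at hj; omega
  have hkS : (k : ℝ≥0∞) ≤ 8 * N₀ * #S := by exact_mod_cast (mul_assoc 8 N₀ #S).symm ▸ hcard
  have hsum : (#S : ℝ≥0∞) * ((k : ℝ≥0∞) * ‖c k‖ₑ) ≤ #S * (μ * (4 * A + 8 * N₀ * T)) :=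
    calc (#S : ℝ≥0∞) * ((k : ℝ≥0∞) * ‖c k‖ₑ) = k * ∑ _j ∈ S, ‖c k‖ₑ := by
          rw [sum_const, nsmul_eq_mul]; ring
      _ ≤ k * ∑ j ∈ S, μ * ‖c j‖ₑ := by gcongr with j hj; exact hrep j hj
      _ = μ * (∑ j ∈ S.filter (· ≤ 2 * n), k * ‖c j‖ₑ +
            k * ∑ j ∈ S.filter (¬ · ≤ 2 * n), ‖c j‖ₑ) := by
          rw [← sum_filter_add_sum_filter_not S (· ≤ 2 * n)]
          simp only [mul_add, mul_sum]
          congr 1 <;> exact sum_congr rfl fun _ _ => mul_left_comm _ _ _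
      _ ≤ μ * (#S * (4 * A) + 8 * N₀ * #S * T) := by
          gcongr
          calc ∑ j ∈ S.filter (· ≤ 2 * n), (k : ℝ≥0∞) * ‖c j‖ₑ
              ≤ #(S.filter (· ≤ 2 * n)) • (4 * A) := sum_le_card_nsmul _ _ _ hhead
            _ ≤ #S * (4 * A) := by rw [nsmul_eq_mul]; gcongr; exact filter_subset _ _
      _ = #S * (μ * (4 * A + 8 * N₀ * T)) := by ring
  have hS0 : (#S : ℝ≥0∞) ≠ 0 := by
    have : #S ≠ 0 := fun h => by rw [h] at hcard; omega
    exact_mod_cast this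
  calc (k : ℝ≥0∞) * ‖c k‖ₑ ≤ μ * (4 * A + 8 * N₀ * T) :=
        (ENNReal.mul_le_mul_iff_right hS0 (ENNReal.natCast_ne_top _)).1 hsum
    _ ≤ μ * (8 * N₀ * A + 8 * N₀ * T) := by
        gcongr
        calc (4 : ℝ≥0∞) ≤ 8 * 1 := by norm_num
          _ ≤ 8 * N₀ := by gcongr; exact_mod_cast hN₀
    _ = 8 * N₀ * μ * (A + T) := by ring

end WindowVariationBound

theorem stmt_16_general (fhat : ℤ → ℂ)
    (h2 : GBV (fun n : ℕ => fhat (n : ℤ) + fhat (-(n : ℤ)))) :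
    ∃ C : ℝ≥0, 0 < C ∧ ∀ᶠ n : ℕ in Filter.atTop,
      (⨆ k : ℕ, ⨆ _ : 2 * n + 1 ≤ k, (k : ℝ≥0∞) *
          (‖fhat (k : ℤ) + fhat (-(k : ℤ))‖₊ : ℝ≥0∞))
      ≤ (C : ℝ≥0∞) *
      ((⨆ k ∈ Finset.Icc 1 n, (k : ℝ≥0∞) *
          ((‖fhat ((n : ℤ) + (k : ℤ))‖₊ : ℝ≥0∞) + (‖fhat (-(n : ℤ) - (k : ℤ))‖₊ : ℝ≥0∞)))
      + (∑' k : ℕ, (‖fhat ((2 * n + 1 + k : ℕ) : ℤ) + fhat (-((2 * n + 1 + k : ℕ) : ℤ))‖₊ : ℝ≥0∞))) := by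
  obtain ⟨-, N₀, hN₀, M, hM, hc⟩ := h2
  refine ⟨8 * N₀ * (M + 1).toNNReal,
    mul_pos (mul_pos (by norm_num) (by exact_mod_cast hN₀)) (Real.toNNReal_pos.2 (by linarith)),
    eventually_atTop.2 ⟨4 * N₀ + 4, fun n hn => iSup₂_le fun k hk => ?_⟩⟩
  have hC : ((8 * N₀ * (M + 1).toNNReal : ℝ≥0) : ℝ≥0∞) = 8 * N₀ * ENNReal.ofReal (M + 1) := by
    push_cast; rfl
  rw [hC]
  refine WindowVariationBound.natCast_mul_enorm_le hc hN₀ hM.le hn hk fun j hj => ?_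
  rw [mem_Ioc] at hj
  refine le_iSup₂_of_le (j - n) (mem_Icc.2 ⟨by omega, by omega⟩) ?_
  have hpos : (n : ℤ) + ((j - n : ℕ) : ℤ) = j := by omega
  have hneg : -(n : ℤ) - ((j - n : ℕ) : ℤ) = -j := by omega
  rw [hpos, hneg]
  gcongr
  exact enorm_add_le _ _

/-- Under the GBV hypotheses with `f ∈ C_{2π}`, for all sufficiently large `n`:
`sup_{k≥2n+1} k|f̂(k)+f̂(−k)| ≤ C·(max_{1≤k≤n} k(|f̂(n+k)|+|f̂(−n−k)|)
 + Σ_{k=2n+1}^∞ |f̂(k)+f̂(−k)|)` (suprema and the tail sum taken in `ℝ≥0∞`). -/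
theorem stmt_16 (fhat : ℤ → ℂ) (f : ℝ → ℂ)
    (h1 : GBV (fun n : ℕ => fhat (n : ℤ)))
    (h2 : GBV (fun n : ℕ => fhat (n : ℤ) + fhat (-(n : ℤ))))
    (hconv : ∀ x : ℝ, Filter.Tendsto
      (fun N : ℕ => ∑ k ∈ Finset.Icc (-(N : ℤ)) (N : ℤ),
        fhat k * Complex.exp ((k : ℂ) * (x : ℂ) * Complex.I))
      Filter.atTop (nhds (f x)))
    (hcont : Continuous f) :
    ∃ C : ℝ≥0, 0 < C ∧ ∀ᶠ n : ℕ in Filter.atTop,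
      (⨆ k : ℕ, ⨆ _ : 2 * n + 1 ≤ k, (k : ℝ≥0∞) *
          (‖fhat (k : ℤ) + fhat (-(k : ℤ))‖₊ : ℝ≥0∞))
      ≤ (C : ℝ≥0∞) *
      ((⨆ k ∈ Finset.Icc 1 n, (k : ℝ≥0∞) *
          ((‖fhat ((n : ℤ) + (k : ℤ))‖₊ : ℝ≥0∞) + (‖fhat (-(n : ℤ) - (k : ℤ))‖₊ : ℝ≥0∞)))
      + (∑' k : ℕ, (‖fhat ((2 * n + 1 + k : ℕ) : ℤ) + fhat (-((2 * n + 1 + k : ℕ) : ℤ))‖₊ : ℝ≥0∞))) :=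
  stmt_16_general fhat h2
end
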